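/- Let 0 < μ < 2/5 and let n ≥ 1 be an integer with n ≡ 1 (mod 4). Then G_n > (1/n²)·[1 − ((μπ/2)⁶ + 3(μπ/2)²) / (2·(1 − (μπ/2)⁴)²)]. -/

import Mathlib

/-!
Write `G μ n = ∫₀^{π/2} f(t) sin(nt) dt` with `f(t) = t / √(1 + (μt)²)`. Integrating by parts
four times, and using `cos(nπ/2) = 0`, `sin(nπ/2) = 1` for `n ≡ 1 (mod 4)` and `f(0) = f''(0) = 0`,
`n² G_n = f'(π/2) + (R_n - f'''(π/2)) / n²` with `R_n = ∫₀^{π/2} f⁗(t) sin(nt) dt`.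
With `u = (μπ/2)²` and `s = √(1 + u)` we have `f'(π/2) = s⁻³` and `f'''(π/2) = 3μ²(4u - 1)s⁻⁷`.
For `μ < 2/5` the fourth derivative is nonnegative on `[0, π/2]`, so `R_1 ≥ 0` and
`R_n ≥ -∫₀^{π/2} f⁗ = -(f'''(π/2) + 3μ²)` for every `n`; since `n ≥ 5` when `n ≠ 1`, the claim
reduces to inequalities in `u` and `s`, which `s ≤ 1 + u/2` turns into polynomial inequalities
on `0 < u ≤ 2/5`.
-/

open Real MeasureTheory

/-- The hyper-geometric integral `G_n = ∫₀^{π/2} t sin(nt)/√(1+(μt)²) dt`. -/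
noncomputable def G (μ : ℝ) (n : ℕ) : ℝ :=
  ∫ t in (0:ℝ)..(π / 2), t * Real.sin ((n : ℝ) * t) / Real.sqrt (1 + (μ * t) ^ 2)

noncomputable def sinIbpBoundary (f f₁ f₂ f₃ : ℝ → ℝ) (c t : ℝ) : ℝ :=
  -f t * cos (c * t) / c + f₁ t * sin (c * t) / c ^ 2 + f₂ t * cos (c * t) / c ^ 3
    - f₃ t * sin (c * t) / c ^ 4

theorem integral_mul_sin_eq_of_hasDerivAt {f f₁ f₂ f₃ f₄ : ℝ → ℝ} {a b c : ℝ} (hc : c ≠ 0)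
    (h₀ : ∀ t, HasDerivAt f (f₁ t) t) (h₁ : ∀ t, HasDerivAt f₁ (f₂ t) t)
    (h₂ : ∀ t, HasDerivAt f₂ (f₃ t) t) (h₃ : ∀ t, HasDerivAt f₃ (f₄ t) t)
    (h₄ : IntervalIntegrable f₄ volume a b) :
    ∫ t in a..b, f t * sin (c * t) =
      sinIbpBoundary f f₁ f₂ f₃ c b - sinIbpBoundary f f₁ f₂ f₃ c a
        + (∫ t in a..b, f₄ t * sin (c * t)) / c ^ 4 := by
  have hB : ∀ t, HasDerivAt (sinIbpBoundary f f₁ f₂ f₃ c)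
      (f t * sin (c * t) - f₄ t * sin (c * t) / c ^ 4) t := by
    intro t
    have hct : HasDerivAt (fun t => c * t) c t := by simpa using (hasDerivAt_id' t).const_mul c
    have hsin := hct.sin
    have hcos := hct.cos
    refine (((((h₀ t).neg.mul hcos).div_const c).add (((h₁ t).mul hsin).div_const _)).add
      (((h₂ t).mul hcos).div_const _) |>.sub (((h₃ t).mul hsin).div_const _)).congr_deriv ?_
    simp only [Pi.neg_apply]
    field_simp
    ring
  have hf : Continuous f := continuous_iff_continuousAt.2 fun t => (h₀ t).continuousAt
  have hint₀ : IntervalIntegrable (fun t => f t * sin (c * t)) volume a b :=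
    (hf.mul (by fun_prop)).intervalIntegrable _ _
  have hint₄ : IntervalIntegrable (fun t => f₄ t * sin (c * t) / c ^ 4) volume a b :=
    (h₄.mul_continuousOn (by fun_prop)).div_const _
  rw [← intervalIntegral.integral_eq_sub_of_hasDerivAt (fun t _ => hB t) (hint₀.sub hint₄),
    intervalIntegral.integral_sub hint₀ hint₄, intervalIntegral.integral_div]
  ring

namespace GIntegral

noncomputable def S (μ t : ℝ) : ℝ := √(1 + (μ * t) ^ 2)

lemma S_pos (μ t : ℝ) : 0 < S μ t := Real.sqrt_pos.2 (by positivity)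

lemma S_sq (μ t : ℝ) : S μ t ^ 2 = 1 + (μ * t) ^ 2 := Real.sq_sqrt (by positivity)

lemma continuous_S (μ : ℝ) : Continuous (S μ) := by unfold S; fun_prop

lemma hasDerivAt_S (μ t : ℝ) : HasDerivAt (S μ) (μ ^ 2 * t / S μ t) t := by
  have hq : HasDerivAt (fun t => 1 + (μ * t) ^ 2) (2 * μ ^ 2 * t) t :=
    ((((hasDerivAt_id' t).const_mul μ).pow 2).const_add 1).congr_deriv (by ring)
  refine (hq.sqrt (by positivity)).congr_deriv ?_
  rw [S]
  field_simp

lemma hasDerivAt_inv_S_pow (μ t : ℝ) (k : ℕ) :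
    HasDerivAt (fun t => (S μ t ^ (k + 1))⁻¹)
      (-((k + 1) * μ ^ 2 * t) * (S μ t ^ (k + 3))⁻¹) t := by
  have hS := (S_pos μ t).ne'
  refine (((hasDerivAt_S μ t).pow (k + 1)).inv (pow_ne_zero _ hS)).congr_deriv ?_
  simp only [Nat.add_sub_cancel, Nat.cast_add, Nat.cast_one, pow_add, Pi.pow_apply]
  field_simp

noncomputable def f₀ (μ t : ℝ) : ℝ := t * (S μ t)⁻¹
noncomputable def f₁ (μ t : ℝ) : ℝ := (S μ t ^ 3)⁻¹
noncomputable def f₂ (μ t : ℝ) : ℝ := -3 * μ ^ 2 * t * (S μ t ^ 5)⁻¹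
noncomputable def f₃ (μ t : ℝ) : ℝ := 3 * μ ^ 2 * (4 * (μ * t) ^ 2 - 1) * (S μ t ^ 7)⁻¹
noncomputable def f₄ (μ t : ℝ) : ℝ := 15 * μ ^ 4 * t * (3 - 4 * (μ * t) ^ 2) * (S μ t ^ 9)⁻¹

lemma hasDerivAt_f₀ (μ t : ℝ) : HasDerivAt (f₀ μ) (f₁ μ t) t := by
  have hS := (S_pos μ t).ne'
  refine ((hasDerivAt_id' t).mul ((hasDerivAt_S μ t).inv hS)).congr_deriv ?_
  simp only [f₁, Pi.inv_apply]
  field_simp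
  linear_combination S_sq μ t

lemma hasDerivAt_f₁ (μ t : ℝ) : HasDerivAt (f₁ μ) (f₂ μ t) t :=
  (hasDerivAt_inv_S_pow μ t 2).congr_deriv (by rw [f₂]; norm_num)

lemma hasDerivAt_f₂ (μ t : ℝ) : HasDerivAt (f₂ μ) (f₃ μ t) t := by
  have hS := (S_pos μ t).ne'
  refine (((hasDerivAt_id' t).const_mul (-3 * μ ^ 2)).mul
    (hasDerivAt_inv_S_pow μ t 4)).congr_deriv ?_
  rw [f₃]
  field_simp
  linear_combination -μ ^ 2 * S μ t ^ 12 * S_sq μ t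

lemma hasDerivAt_f₃ (μ t : ℝ) : HasDerivAt (f₃ μ) (f₄ μ t) t := by
  have hS := (S_pos μ t).ne'
  have hp : HasDerivAt (fun t => 3 * μ ^ 2 * (4 * (μ * t) ^ 2 - 1)) (24 * μ ^ 4 * t) t :=
    (((((hasDerivAt_id' t).const_mul μ).pow 2).const_mul 4).sub_const 1).const_mul
      (3 * μ ^ 2) |>.congr_deriv (by ring)
  refine (hp.mul (hasDerivAt_inv_S_pow μ t 6)).congr_deriv ?_
  rw [f₄]
  field_simp
  linear_combination 24 * μ ^ 4 * t * S μ t ^ 16 * S_sq μ t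

lemma continuous_f₄ (μ : ℝ) : Continuous (f₄ μ) := by
  have := continuous_S μ
  unfold f₄
  fun_prop (disch := exact fun t => pow_ne_zero _ (S_pos μ t).ne')

lemma f₄_nonneg {μ t : ℝ} (hμ : (μ * π) ^ 2 ≤ 3) (ht : t ∈ Set.Icc 0 (π / 2)) :
    0 ≤ f₄ μ t := by
  have ht₀ := ht.1
  have hsq : t ^ 2 ≤ (π / 2) ^ 2 := pow_le_pow_left₀ ht.1 ht.2 2
  have hμt : 0 ≤ 3 - 4 * (μ * t) ^ 2 := by nlinarith [sq_nonneg μ]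
  have hS := S_pos μ t
  unfold f₄
  positivity

noncomputable def remainder (μ : ℝ) (n : ℕ) : ℝ := ∫ t in (0 : ℝ)..π / 2, f₄ μ t * sin (n * t)

lemma cos_sin_of_mod_four_eq_one {n : ℕ} (hn : n % 4 = 1) :
    cos (n * (π / 2)) = 0 ∧ sin (n * (π / 2)) = 1 := by
  obtain ⟨m, rfl⟩ : ∃ m, n = 4 * m + 1 := ⟨n / 4, by omega⟩
  have h : ((4 * m + 1 : ℕ) : ℝ) * (π / 2) = π / 2 + m * (2 * π) := by push_cast; ring
  rw [h, cos_add_nat_mul_two_pi, sin_add_nat_mul_two_pi, cos_pi_div_two, sin_pi_div_two]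
  exact ⟨rfl, rfl⟩

theorem G_eq_of_mod_four_eq_one (μ : ℝ) {n : ℕ} (hn : n % 4 = 1) :
    G μ n = (f₁ μ (π / 2) + (remainder μ n - f₃ μ (π / 2)) / n ^ 2) / n ^ 2 := by
  have hn₀ : (n : ℝ) ≠ 0 := by exact_mod_cast (show n ≠ 0 by omega)
  obtain ⟨hcos, hsin⟩ := cos_sin_of_mod_four_eq_one hn
  have hG : G μ n = ∫ t in (0 : ℝ)..π / 2, f₀ μ t * sin (n * t) := by
    simp only [G, f₀, S, div_eq_mul_inv]
    congr 1
    ext t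
    ring
  rw [hG, integral_mul_sin_eq_of_hasDerivAt hn₀ (hasDerivAt_f₀ μ) (hasDerivAt_f₁ μ)
    (hasDerivAt_f₂ μ) (hasDerivAt_f₃ μ) ((continuous_f₄ μ).intervalIntegrable _ _)]
  simp only [sinIbpBoundary, hcos, hsin, remainder, mul_zero, sin_zero, f₀, f₂]
  field_simp
  ring

lemma remainder_one_nonneg {μ : ℝ} (hμ : (μ * π) ^ 2 ≤ 3) : 0 ≤ remainder μ 1 := by
  refine intervalIntegral.integral_nonneg pi_div_two_pos.le fun t ht => ?_
  rw [Nat.cast_one, one_mul]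
  exact mul_nonneg (f₄_nonneg hμ ht)
    (sin_nonneg_of_nonneg_of_le_pi ht.1 (by linarith [ht.2, pi_pos]))

lemma neg_f₃_sub_le_remainder {μ : ℝ} (hμ : (μ * π) ^ 2 ≤ 3) (n : ℕ) :
    -(f₃ μ (π / 2) + 3 * μ ^ 2) ≤ remainder μ n := by
  have hf₃ : ∫ t in (0 : ℝ)..π / 2, f₄ μ t = f₃ μ (π / 2) + 3 * μ ^ 2 := by
    rw [intervalIntegral.integral_eq_sub_of_hasDerivAt (fun t _ => hasDerivAt_f₃ μ t)
      ((continuous_f₄ μ).intervalIntegrable _ _)]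
    simp [f₃, S]
  rw [← hf₃, ← intervalIntegral.integral_neg]
  refine intervalIntegral.integral_mono_on pi_div_two_pos.le
    ((continuous_f₄ μ).neg.intervalIntegrable _ _)
    (((continuous_f₄ μ).mul (by fun_prop)).intervalIntegrable _ _) fun t ht => ?_
  nlinarith [f₄_nonneg hμ ht, neg_one_le_sin (n * t)]

noncomputable def bracket (u : ℝ) : ℝ := 1 - (u ^ 3 + 3 * u) / (2 * (1 - u ^ 2) ^ 2)

section
variable {u s : ℝ}

lemma two_div_two_add_le_inv (hs₀ : 0 < s) (hs : s ^ 2 = 1 + u) : 2 / (2 + u) ≤ s⁻¹ := by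
  rw [← one_div, div_le_div_iff₀ (by nlinarith) hs₀]
  nlinarith [sq_nonneg (s - 1)]

lemma bracket_lt_inv_pow_three (hu₀ : 0 < u) (hu : u ≤ 2 / 5) (hs₀ : 0 < s)
    (hs : s ^ 2 = 1 + u) : bracket u < (s ^ 3)⁻¹ := by
  have hD : 0 < 2 * (1 - u ^ 2) ^ 2 := by nlinarith
  calc bracket u < 2 / (2 + u) / (1 + u) := by
        rw [bracket, one_sub_div hD.ne', div_div, div_lt_div_iff₀ hD (by positivity)]
        nlinarith [mul_pos hu₀ hu₀, mul_pos (mul_pos hu₀ hu₀) hu₀,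
          mul_pos (mul_pos hu₀ hu₀) (sub_pos.2 (show u < 1 by linarith))]
    _ ≤ s⁻¹ / (1 + u) := by gcongr; exact two_div_two_add_le_inv hs₀ hs
    _ = (s ^ 3)⁻¹ := by rw [← hs]; field_simp

lemma bracket_lt_inv_pow_three_add_mul (hu₀ : 0 < u) (hu : u ≤ 2 / 5) (hs₀ : 0 < s)
    (hs : s ^ 2 = 1 + u) {m : ℝ} (hm₀ : 0 ≤ m) (hm : m ≤ 12 / 25) :
    bracket u < (s ^ 3)⁻¹ + m * (1 - 4 * u) * (s ^ 7)⁻¹ := by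
  rcases le_total u (1 / 4) with hq | hq
  · have : 0 ≤ m * (1 - 4 * u) * (s ^ 7)⁻¹ :=
      mul_nonneg (mul_nonneg hm₀ (by linarith)) (by positivity)
    linarith [bracket_lt_inv_pow_three hu₀ hu hs₀ hs]
  have hD : 0 < 2 * (1 - u ^ 2) ^ 2 := by nlinarith
  have hQ : 0 ≤ (1 + u) ^ 2 + 12 / 25 * (1 - 4 * u) := by nlinarith
  calc bracket u < 2 / (2 + u) * ((1 + u) ^ 2 + 12 / 25 * (1 - 4 * u)) / (1 + u) ^ 3 := by
        rw [bracket, one_sub_div hD.ne', div_mul_eq_mul_div, div_div,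
          div_lt_div_iff₀ hD (by positivity)]
        nlinarith [mul_nonneg (pow_pos hu₀ 5).le (sub_nonneg.2 hu),
          mul_nonneg (pow_pos hu₀ 6).le (sub_nonneg.2 hu),
          mul_nonneg (pow_pos hu₀ 7).le (sub_nonneg.2 hu), pow_pos hu₀ 2, pow_pos hu₀ 3,
          pow_pos hu₀ 4, mul_nonneg (sub_nonneg.2 hq) (sub_nonneg.2 hu)]
    _ ≤ s⁻¹ * ((1 + u) ^ 2 + 12 / 25 * (1 - 4 * u)) / (1 + u) ^ 3 := by
        gcongr; exact two_div_two_add_le_inv hs₀ hs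
    _ = (s ^ 3)⁻¹ + 12 / 25 * (1 - 4 * u) * (s ^ 7)⁻¹ := by rw [← hs]; field_simp
    _ ≤ (s ^ 3)⁻¹ + m * (1 - 4 * u) * (s ^ 7)⁻¹ := by
        rw [add_le_add_iff_left]
        exact mul_le_mul_of_nonneg_right (mul_le_mul_of_nonpos_right hm (by linarith)) (by positivity)

lemma bracket_lt_inv_pow_three_add_mul_div (hu₀ : 0 < u) (hu : u ≤ 2 / 5) (hs₀ : 0 < s)
    (hs : s ^ 2 = 1 + u) {m N : ℝ} (hm₀ : 0 ≤ m) (hm : m ≤ 12 / 25) (hN : 25 ≤ N) :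
    bracket u < (s ^ 3)⁻¹ + m * (2 * (1 - 4 * u) * (s ^ 7)⁻¹ - 1) / N := by
  set β := 2 * (1 - 4 * u) * (s ^ 7)⁻¹ - 1 with hβ_def
  rcases le_total 0 β with hβ | hβ
  · have : 0 ≤ m * β / N := by positivity
    linarith [bracket_lt_inv_pow_three hu₀ hu hs₀ hs]
  have hD : 0 < 2 * (1 - u ^ 2) ^ 2 := by nlinarith
  have hQ : 0 ≤ (1 + u) ^ 2 + 24 / 625 * (1 - 4 * u) := by nlinarith
  calc bracket u
      < 2 / (2 + u) * ((1 + u) ^ 2 + 24 / 625 * (1 - 4 * u)) / (1 + u) ^ 3 - 12 / 625 := by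
        rw [lt_sub_iff_add_lt, bracket, one_sub_div hD.ne', div_add' _ _ _ hD.ne',
          div_mul_eq_mul_div 2, div_div, div_lt_div_iff₀ hD (by positivity)]
        nlinarith [mul_nonneg (pow_pos hu₀ 5).le (sub_nonneg.2 hu),
          mul_nonneg (pow_pos hu₀ 6).le (sub_nonneg.2 hu),
          mul_nonneg (pow_pos hu₀ 7).le (sub_nonneg.2 hu), sq_nonneg (u - 0.068),
          pow_pos hu₀ 3, pow_pos hu₀ 4, pow_pos hu₀ 5]
    _ ≤ s⁻¹ * ((1 + u) ^ 2 + 24 / 625 * (1 - 4 * u)) / (1 + u) ^ 3 - 12 / 625 := by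
        gcongr; exact two_div_two_add_le_inv hs₀ hs
    _ = (s ^ 3)⁻¹ + 12 / 25 * β / 25 := by rw [hβ_def, ← hs]; field_simp; ring
    _ ≤ (s ^ 3)⁻¹ + m * β / 25 := by
        rw [add_le_add_iff_left]
        exact div_le_div_of_nonneg_right (mul_le_mul_of_nonpos_right hm hβ) (by norm_num)
    _ ≤ (s ^ 3)⁻¹ + m * β / N := by
        have hmβ := mul_nonpos_of_nonneg_of_nonpos hm₀ hβ
        rw [add_le_add_iff_left, div_le_div_iff₀ (by norm_num) (by linarith)]
        nlinarith

end

end GIntegral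

open GIntegral in
theorem G_lower_bound_general (μ : ℝ) (hμ0 : 0 < μ) (hμ : μ < 2 / 5) (n : ℕ)
    (hn4 : n % 4 = 1) :
    (1 / (n : ℝ) ^ 2) *
        (1 - ((μ * π / 2) ^ 6 + 3 * (μ * π / 2) ^ 2) / (2 * (1 - (μ * π / 2) ^ 4) ^ 2))
      < G μ n := by
  have hn : n ≠ 0 := by omega
  have hμπ_lt : μ * π < 1.26 := by nlinarith [pi_lt_d2, pi_pos]
  have hμπ : (μ * π) ^ 2 ≤ 3 := by nlinarith [mul_pos hμ0 pi_pos]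
  have hm : 3 * μ ^ 2 ≤ 12 / 25 := by nlinarith
  set u := (μ * (π / 2)) ^ 2 with hu
  have hu₀ : 0 < u := by positivity
  have hu₁ : u ≤ 2 / 5 := by nlinarith [mul_pos hμ0 pi_pos]
  have hs := S_sq μ (π / 2)
  have hbracket : 1 - ((μ * π / 2) ^ 6 + 3 * (μ * π / 2) ^ 2) / (2 * (1 - (μ * π / 2) ^ 4) ^ 2)
      = bracket u := by rw [bracket, hu]; ring
  rw [G_eq_of_mod_four_eq_one μ hn4, hbracket, one_div_mul_eq_div,
    div_lt_div_iff_of_pos_right (by positivity), f₁, f₃, ← hu]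
  obtain rfl | h5 : n = 1 ∨ 5 ≤ n := by omega
  · calc _ < (S μ (π / 2) ^ 3)⁻¹ + 3 * μ ^ 2 * (1 - 4 * u) * (S μ (π / 2) ^ 7)⁻¹ :=
          bracket_lt_inv_pow_three_add_mul hu₀ hu₁ (S_pos _ _) hs (by positivity) hm
      _ ≤ _ := by linarith [remainder_one_nonneg hμπ]
  · have hR := neg_f₃_sub_le_remainder hμπ n
    rw [f₃, ← hu] at hR
    calc _ < (S μ (π / 2) ^ 3)⁻¹
          + 3 * μ ^ 2 * (2 * (1 - 4 * u) * (S μ (π / 2) ^ 7)⁻¹ - 1) / n ^ 2 :=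
          bracket_lt_inv_pow_three_add_mul_div hu₀ hu₁ (S_pos _ _) hs (by positivity) hm
            (by norm_cast; nlinarith)
      _ ≤ _ := by gcongr; linarith

/-- For `0 < μ < 2/5` and `n ≡ 1 (mod 4)`,
`G_n > (1/n²) [1 − ((μπ/2)⁶ + 3(μπ/2)²) / (2(1 − (μπ/2)⁴)²)]`. -/
theorem G_lower_bound (μ : ℝ) (hμ0 : 0 < μ) (hμ : μ < 2 / 5) (n : ℕ) (hn : 1 ≤ n)
    (hn4 : n % 4 = 1) :
    (1 / (n : ℝ) ^ 2) *
        (1 - ((μ * π / 2) ^ 6 + 3 * (μ * π / 2) ^ 2) / (2 * (1 - (μ * π / 2) ^ 4) ^ 2))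
      < G μ n :=
  G_lower_bound_general μ hμ0 hμ n hn4
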